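/- arXiv:1603.06164 — 2 statements merged into one kernel-verified Lean document; each statement's English description precedes it below -/
import Mathlib

section
/- Let d, m, n be positive integers with dm ≤ n < 2^m. Then there exist dm vectors v₁, …, v_{dm} in F₂^n such that for any two distinct vectors x, y ∈ F₂^n each of Hamming weight at most d, there is an index i with x · v_i ≠ y · v_i, where · denotes the standard bilinear form over F₂. -/
/-!
The vectors are the parity checks of a binary BCH code. Choose distinct nonzero elements
`α₁, …, αₙ` of `𝔽_{2^m}` (possible as `n < 2^m`) and let the checks read off the `m` coordinates of
the syndromes `∑ⱼ zⱼ αⱼ^(2k+1)`, `k < d`. If `x` and `y` are not separated, `z = x - y` has weight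
at most `2d` and vanishing odd syndromes; squaring in characteristic `2` makes every power sum
`∑_{j ∈ supp z} αⱼ^e`, `1 ≤ e ≤ 2d`, vanish, and a Vandermonde determinant then forces `supp z = ∅`.
-/

open Finset

theorem hammingNorm_sub_le {ι : Type*} [Fintype ι] {β : ι → Type*} [∀ i, AddGroup (β i)]
    [∀ i, DecidableEq (β i)] (x y : ∀ i, β i) :
    hammingNorm (x - y) ≤ hammingNorm x + hammingNorm y := by
  calc hammingNorm (x - y) = hammingDist x y := by
        simp only [hammingNorm, hammingDist, Pi.sub_apply, ne_eq, sub_eq_zero]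
    _ ≤ hammingDist x 0 + hammingDist 0 y := hammingDist_triangle x 0 y
    _ = hammingNorm x + hammingNorm y := by
      rw [hammingDist_zero_right, hammingDist_zero_left]

theorem CharTwo.sum_pow_eq_zero_of_sum_odd_pow_eq_zero {R ι : Type*} [CommSemiring R] [CharP R 2]
    (s : Finset ι) (f : ι → R) {d : ℕ} (h : ∀ k < d, ∑ i ∈ s, f i ^ (2 * k + 1) = 0) :
    ∀ e, 1 ≤ e → e ≤ 2 * d → ∑ i ∈ s, f i ^ e = 0 := by
  intro e
  induction e using Nat.strong_induction_on with
  | _ e ih =>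
    intro he1 he2
    obtain ⟨c, rfl | rfl⟩ := Nat.even_or_odd' e
    · have hsq : ∑ i ∈ s, f i ^ (2 * c) = (∑ i ∈ s, f i ^ c) ^ 2 := by
        simp only [CharTwo.sum_sq, ← pow_mul, mul_comm]
      rw [hsq, ih c (by omega) (by omega) (by omega), zero_pow two_ne_zero]
    · exact h c (by omega)

theorem Finset.eq_empty_of_forall_sum_pow_eq_zero {R : Type*} [CommRing R] [IsDomain R]
    {S : Finset R} (h0 : (0 : R) ∉ S) (h : ∀ e, 1 ≤ e → e ≤ #S → ∑ a ∈ S, a ^ e = 0) :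
    S = ∅ := by
  by_contra hS
  let a : Fin #S → R := fun i => S.equivFin.symm i
  have ha : Function.Injective a := Subtype.val_injective.comp S.equivFin.symm.injective
  -- Read `∑ a^(i+1) = ∑ a · a^i` as the vector `a` in the left kernel of the Vandermonde matrix.
  have ha_zero : a = 0 := by
    refine Matrix.eq_zero_of_forall_pow_sum_mul_pow_eq_zero ha fun i => ?_
    simp_rw [← pow_succ']
    rw [Fintype.sum_equiv S.equivFin.symm _ (fun x => (x : R) ^ ((i : ℕ) + 1)) fun _ => rfl,
      Finset.sum_coe_sort S fun x => x ^ ((i : ℕ) + 1)]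
    exact h _ (Nat.le_add_left 1 i) i.isLt
  have hpos : 0 < #S := Finset.card_pos.mpr (Finset.nonempty_iff_ne_empty.mpr hS)
  have hmem : a ⟨0, hpos⟩ ∈ S := (S.equivFin.symm ⟨0, hpos⟩).2
  rw [ha_zero] at hmem
  exact h0 hmem

theorem sum_smul_eq_sum_filter_ne_zero {ι M : Type*} [Fintype ι] [AddCommMonoid M]
    [Module (ZMod 2) M] (z : ι → ZMod 2) (g : ι → M) :
    ∑ j, z j • g j = ∑ j ∈ univ.filter (fun j => z j ≠ 0), g j := by
  rw [Finset.sum_filter]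
  refine Finset.sum_congr rfl fun j _ => ?_
  rcases (by decide : ∀ w : ZMod 2, w = 0 ∨ w = 1) (z j) with hz | hz <;> simp [hz]

theorem eq_zero_of_forall_sum_smul_odd_pow_eq_zero {ι K : Type*} [Fintype ι] [Field K] [CharP K 2]
    [Module (ZMod 2) K] (α : ι ↪ K) (hα : ∀ j, α j ≠ 0) {d : ℕ} {z : ι → ZMod 2}
    (hz : hammingNorm z ≤ 2 * d) (h : ∀ k < d, ∑ j, z j • α j ^ (2 * k + 1) = 0) : z = 0 := by
  classical
  set S := (univ.filter fun j => z j ≠ 0).map α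
  have hsum : ∀ e, ∑ j, z j • α j ^ e = ∑ a ∈ S, a ^ e := fun e => by
    rw [sum_smul_eq_sum_filter_ne_zero, Finset.sum_map]
  have hcard : #S = hammingNorm z := by rw [Finset.card_map, hammingNorm]
  have hS : S = ∅ := by
    refine Finset.eq_empty_of_forall_sum_pow_eq_zero (by simpa [S] using fun j _ => hα j)
      fun e he1 he2 => ?_
    exact CharTwo.sum_pow_eq_zero_of_sum_odd_pow_eq_zero S id
      (fun k hk => (hsum _).symm.trans (h k hk)) e he1 (he2.trans (hcard ▸ hz))
  rw [← hammingNorm_eq_zero, ← hcard, hS, Finset.card_empty]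

section BCH

variable {ι σ F K : Type*} [Semiring F] [Semiring K] [Module F K]

noncomputable def bchParityCheck (b : Module.Basis ι F K) (α : σ → K) (d : ℕ) (i : Fin d × ι) :
    σ → F :=
  fun j => b.repr (α j ^ (2 * (i.1 : ℕ) + 1)) i.2

theorem dotProduct_bchParityCheck [Fintype σ] (b : Module.Basis ι F K) (α : σ → K) (d : ℕ)
    (z : σ → F) (i : Fin d × ι) :
    z ⬝ᵥ bchParityCheck b α d i = b.repr (∑ j, z j • α j ^ (2 * (i.1 : ℕ) + 1)) i.2 := by
  simp [dotProduct, bchParityCheck, map_sum, Finsupp.finsetSum_apply]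

theorem sum_smul_odd_pow_eq_zero_of_forall_dotProduct_bchParityCheck [Fintype σ]
    (b : Module.Basis ι F K) (α : σ → K) {d : ℕ} {z : σ → F}
    (h : ∀ i, z ⬝ᵥ bchParityCheck b α d i = 0) :
    ∀ k < d, ∑ j, z j • α j ^ (2 * k + 1) = 0 := by
  intro k hk
  refine b.ext_elem_iff.mpr fun t => ?_
  simpa [dotProduct_bchParityCheck] using h (⟨k, hk⟩, t)

end BCH

theorem exists_separating_vectors_general (d m n : ℕ) (hm : 0 < m) (h2 : n < 2 ^ m) :
    ∃ v : Fin (d * m) → (Fin n → ZMod 2),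
      ∀ x y : Fin n → ZMod 2, x ≠ y →
        (Finset.univ.filter fun j => x j ≠ 0).card ≤ d →
        (Finset.univ.filter fun j => y j ≠ 0).card ≤ d →
        ∃ i : Fin (d * m), (∑ j, x j * v i j) ≠ ∑ j, y j * v i j := by
  classical
  let K := GaloisField 2 m
  have : Fintype K := Fintype.ofFinite K
  have hcard : Fintype.card (Fin n) ≤ Fintype.card Kˣ := by
    rw [Fintype.card_units, Fintype.card_fin, ← Nat.card_eq_fintype_card,
      GaloisField.card 2 m hm.ne']
    omega
  obtain ⟨α⟩ := Function.Embedding.nonempty_of_card_le hcard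
  let b := Module.finBasisOfFinrankEq (ZMod 2) K (GaloisField.finrank 2 hm.ne')
  let locators : Fin n ↪ K := α.trans ⟨Units.val, Units.val_injective⟩
  refine ⟨fun i => bchParityCheck b locators d (finProdFinEquiv.symm i), ?_⟩
  intro x y hxy hx hy
  by_contra! hsep
  refine hxy (sub_eq_zero.mp (eq_zero_of_forall_sum_smul_odd_pow_eq_zero (d := d) locators
    (fun j => (α j).ne_zero) ((hammingNorm_sub_le x y).trans (by unfold hammingNorm; omega))
    (sum_smul_odd_pow_eq_zero_of_forall_dotProduct_bchParityCheck b locators fun i => ?_)))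
  rw [sub_dotProduct, sub_eq_zero]
  have hi := hsep (finProdFinEquiv i)
  rw [Equiv.symm_apply_apply] at hi
  exact hi

theorem exists_separating_vectors (d m n : ℕ) (hd : 0 < d) (hm : 0 < m)
    (h1 : d * m ≤ n) (h2 : n < 2 ^ m) :
    ∃ v : Fin (d * m) → (Fin n → ZMod 2),
      ∀ x y : Fin n → ZMod 2, x ≠ y →
        (Finset.univ.filter fun j => x j ≠ 0).card ≤ d →
        (Finset.univ.filter fun j => y j ≠ 0).card ≤ d →
        ∃ i : Fin (d * m), (∑ j, x j * v i j) ≠ ∑ j, y j * v i j :=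
  exists_separating_vectors_general d m n hm h2
end

section
/- For every positive integer d there is a constant C = C(d) such that for all n ≥ 1 there are at most d·log₂(n) + C subsets A₁, …, A_f of [n] with the separating property: for any two distinct subsets X, Y ⊆ [n] of size at most d, some A_i satisfies |A_i ∩ X| ≢ |A_i ∩ Y| (mod 2). -/
/-!
Label the points of `[n]` by distinct nonzero elements `x i` of `GF(2^m)`, `m = ⌊log₂ n⌋ + 1`,
and take as test sets the `d * m` sets `{i | k-th bit of x i ^ (2t+1) is 1}` for `t < d`.
If `X` and `Y` have the same parities on all of them, then `∑_X x^(2t+1) = ∑_Y x^(2t+1)`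
for `t < d` (the BCH syndromes agree). In characteristic 2 the labels of `X ∆ Y` then have
vanishing odd power sums, hence, by Frobenius, vanishing power sums of all exponents `1, …, 2d`;
a nonempty set of at most `2d` nonzero field elements cannot do that, so `X = Y`.
-/

open Finset Polynomial Function
open scoped symmDiff

/-- `P = X * ∏_{x ∈ S, x ≠ x₀} (X - x)` has no constant term and degree `≤ k`, so `∑_{x ∈ S} P x`
is a combination of the vanishing power sums; but the sum is `P x₀ ≠ 0`. -/
theorem Finset.eq_empty_of_sum_pow_eq_zero {F : Type*} [Field F] {S : Finset F} {k : ℕ}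
    (h0 : (0 : F) ∉ S) (hS : #S ≤ k) (hpow : ∀ j ∈ Icc 1 k, ∑ x ∈ S, x ^ j = 0) : S = ∅ := by
  classical
  by_contra hne
  obtain ⟨x₀, hx₀⟩ := nonempty_iff_ne_empty.2 hne
  set P : F[X] := X * ∏ x ∈ S.erase x₀, (X - C x)
  have hdeg : P.natDegree < k + 1 := by
    have hcard := card_pos.2 ⟨x₀, hx₀⟩
    have hmonic : (∏ x ∈ S.erase x₀, (X - C x)).Monic :=
      monic_prod_of_monic _ _ fun x _ => monic_X_sub_C x
    rw [natDegree_X_mul hmonic.ne_zero, natDegree_finsetProd_X_sub_C_eq_card,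
      card_erase_of_mem hx₀]
    omega
  have hcoeff0 : P.coeff 0 = 0 := by simp [P]
  have hsum_single : ∑ x ∈ S, P.eval x = P.eval x₀ :=
    sum_eq_single_of_mem x₀ hx₀ fun x hx hne =>
      by simp [P, eval_prod, prod_eq_zero (mem_erase.2 ⟨hne, hx⟩) (sub_self x)]
  have hsum_zero : ∑ x ∈ S, P.eval x = 0 := by
    simp_rw [eval_eq_sum_range' hdeg, sum_comm (s := S), ← mul_sum]
    refine sum_eq_zero fun j hj => ?_
    rcases j.eq_zero_or_pos with rfl | hj0
    · simp [hcoeff0]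
    · rw [hpow j (by simp at hj ⊢; omega), mul_zero]
  have hP_ne_zero : P.eval x₀ ≠ 0 := by
    simp only [P, eval_mul, eval_X, eval_prod, eval_sub, eval_C]
    exact mul_ne_zero (ne_of_mem_of_not_mem hx₀ h0)
      (prod_ne_zero_iff.2 fun y hy => sub_ne_zero.2 (mem_erase.1 hy).1.symm)
  exact hP_ne_zero (hsum_single ▸ hsum_zero)

theorem Finset.sum_pow_eq_zero_of_sum_odd_pow_eq_zero {R ι : Type*} [CommRing R] [CharP R 2]
    (S : Finset ι) (g : ι → R) {d : ℕ} (hodd : ∀ t < d, ∑ i ∈ S, g i ^ (2 * t + 1) = 0) :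
    ∀ j ∈ Icc 1 (2 * d), ∑ i ∈ S, g i ^ j = 0 := by
  intro j hj
  induction j using Nat.strong_induction_on with
  | _ j ih =>
    rw [mem_Icc] at hj
    obtain ⟨t, rfl | rfl⟩ := j.even_or_odd'
    · have hsq : ∑ i ∈ S, g i ^ (2 * t) = (∑ i ∈ S, g i ^ t) ^ 2 := by
        simp_rw [sum_pow_char, ← pow_mul, mul_comm]
      rw [hsq, ih t (by omega) (mem_Icc.2 ⟨by omega, by omega⟩), zero_pow two_ne_zero]
    · exact hodd t (by omega)

theorem Finset.sum_symmDiff_eq_add {R ι : Type*} [Ring R] [CharP R 2] [DecidableEq ι]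
    (X Y : Finset ι) (g : ι → R) : ∑ i ∈ X ∆ Y, g i = ∑ i ∈ X, g i + ∑ i ∈ Y, g i := by
  rw [← sum_union_inter, symmDiff_eq_sup_sdiff_inf, sup_eq_union, inf_eq_inter,
    ← sum_sdiff (inter_subset_union (s := X) (t := Y)), add_assoc, CharTwo.add_self_eq_zero,
    add_zero]

theorem eq_of_sum_odd_pow_eq {F α : Type*} [Field F] [CharP F 2] {x : α → F} (hx : Injective x)
    (hx0 : ∀ i, x i ≠ 0) {d : ℕ} {X Y : Finset α} (hX : #X ≤ d) (hY : #Y ≤ d)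
    (h : ∀ t < d, ∑ i ∈ X, x i ^ (2 * t + 1) = ∑ i ∈ Y, x i ^ (2 * t + 1)) : X = Y := by
  classical
  have hodd : ∀ t < d, ∑ i ∈ X ∆ Y, x i ^ (2 * t + 1) = 0 := fun t ht => by
    rw [sum_symmDiff_eq_add, h t ht, CharTwo.add_self_eq_zero]
  have hcard : #((X ∆ Y).image x) ≤ 2 * d := by
    rw [card_image_of_injective _ hx]
    exact (card_le_card symmDiff_subset_union).trans ((card_union_le X Y).trans (by omega))
  have hempty := eq_empty_of_sum_pow_eq_zero (S := (X ∆ Y).image x) (by simp [hx0]) hcard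
    fun j hj => by
      rw [sum_image hx.injOn]; exact sum_pow_eq_zero_of_sum_odd_pow_eq_zero _ _ hodd j hj
  rwa [image_eq_empty, symmDiff_eq_empty] at hempty

theorem ZMod.sum_eq_card_filter_eq_one {ι : Type*} (Z : Finset ι) (w : ι → ZMod 2) :
    ∑ i ∈ Z, w i = #{i ∈ Z | w i = 1} := by
  rw [natCast_card_filter]
  refine sum_congr rfl fun i _ => ?_
  generalize w i = a
  fin_cases a <;> rfl

section Parity

variable {α κ V : Type*} [Fintype α] [DecidableEq α] [AddCommGroup V] [Module (ZMod 2) V]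

noncomputable def paritySet (b : Module.Basis κ (ZMod 2) V) (v : α → V) (k : κ) : Finset α :=
  {i | b.coord k (v i) = 1}

theorem natCast_card_paritySet_inter (b : Module.Basis κ (ZMod 2) V) (v : α → V) (k : κ)
    (Z : Finset α) : (#(paritySet b v k ∩ Z) : ZMod 2) = b.coord k (∑ i ∈ Z, v i) := by
  rw [map_sum, ZMod.sum_eq_card_filter_eq_one, paritySet, filter_inter, univ_inter]

theorem sum_eq_sum_of_card_paritySet_inter_mod_two_eq (b : Module.Basis κ (ZMod 2) V)
    (v : α → V) {X Y : Finset α}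
    (h : ∀ k, #(paritySet b v k ∩ X) % 2 = #(paritySet b v k ∩ Y) % 2) :
    ∑ i ∈ X, v i = ∑ i ∈ Y, v i :=
  b.ext_elem fun k => by
    simpa only [← Module.Basis.coord_apply, ← natCast_card_paritySet_inter,
      ZMod.natCast_eq_natCast_iff'] using h k

end Parity

def SeparatesParity {ι α : Type*} [DecidableEq α] (A : ι → Finset α) (d : ℕ) : Prop :=
  ∀ X Y : Finset α, X ≠ Y → #X ≤ d → #Y ≤ d → ∃ i, #(A i ∩ X) % 2 ≠ #(A i ∩ Y) % 2

theorem SeparatesParity.comp_equiv {ι ι' α : Type*} [DecidableEq α] {A : ι → Finset α} {d : ℕ}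
    (hA : SeparatesParity A d) (e : ι' ≃ ι) : SeparatesParity (A ∘ e) d := fun X Y hXY hX hY =>
  let ⟨i, hi⟩ := hA X Y hXY hX hY
  ⟨e.symm i, by simpa using hi⟩

theorem separatesParity_paritySet_odd_pow {F α κ : Type*} [Fintype α] [DecidableEq α] [Field F]
    [CharP F 2] [Module (ZMod 2) F] (b : Module.Basis κ (ZMod 2) F) {x : α → F}
    (hx : Injective x) (hx0 : ∀ i, x i ≠ 0) (d : ℕ) :
    SeparatesParity
      (fun tk : Fin d × κ => paritySet b (fun i => x i ^ (2 * (tk.1 : ℕ) + 1)) tk.2) d := by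
  intro X Y hXY hX hY
  by_contra! hpar
  exact hXY <| eq_of_sum_odd_pow_eq hx hx0 hX hY fun t ht =>
    sum_eq_sum_of_card_paritySet_inter_mod_two_eq b _ fun k => hpar (⟨t, ht⟩, k)

theorem exists_injective_fin_ne_zero {M₀ : Type*} [GroupWithZero M₀] {n : ℕ}
    (hn : n < Nat.card M₀) :
    ∃ x : Fin n → M₀, Injective x ∧ ∀ i, x i ≠ 0 := by
  have : Finite M₀ := Nat.finite_of_card_ne_zero (by omega)
  have : Fintype M₀ˣ := Fintype.ofFinite _
  obtain ⟨e⟩ : Nonempty (Fin n ↪ M₀ˣ) := Function.Embedding.nonempty_of_card_le (by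
    rw [Fintype.card_fin, ← Nat.card_eq_fintype_card, Nat.card_units]; omega)
  exact ⟨(↑) ∘ e, Units.val_injective.comp e.injective, fun i => (e i).ne_zero⟩

theorem parity_search_d_log_n_general (d : ℕ) :
    ∃ C : ℝ, ∀ n : ℕ, 1 ≤ n →
      ∃ (f : ℕ) (A : Fin f → Finset (Fin n)),
        (f : ℝ) ≤ d * Real.logb 2 n + C ∧
        ∀ X Y : Finset (Fin n), X ≠ Y → X.card ≤ d → Y.card ≤ d →
          ∃ i : Fin f, (A i ∩ X).card % 2 ≠ (A i ∩ Y).card % 2 := by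
  refine ⟨d, fun n _ => ?_⟩
  set m := Nat.log 2 n + 1 with hm
  obtain ⟨x, hx, hx0⟩ : ∃ x : Fin n → GaloisField 2 m, Injective x ∧ ∀ i, x i ≠ 0 :=
    exists_injective_fin_ne_zero <| by
      rw [GaloisField.card 2 m (by omega)]; exact Nat.lt_pow_succ_log_self one_lt_two n
  let b := Module.finBasisOfFinrankEq (ZMod 2) _ (GaloisField.finrank 2 (n := m) (by omega))
  refine ⟨d * m, _, ?_,
    (separatesParity_paritySet_odd_pow b hx hx0 d).comp_equiv finProdFinEquiv.symm⟩
  calc ((d * m : ℕ) : ℝ) = d * (Nat.log 2 n + 1) := by push_cast [hm]; ring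
    _ ≤ d * (Real.logb 2 n + 1) := by gcongr; exact_mod_cast Real.natLog_le_logb n 2
    _ = d * Real.logb 2 n + d := by ring

theorem parity_search_d_log_n (d : ℕ) (hd : 0 < d) :
    ∃ C : ℝ, ∀ n : ℕ, 1 ≤ n →
      ∃ (f : ℕ) (A : Fin f → Finset (Fin n)),
        (f : ℝ) ≤ d * Real.logb 2 n + C ∧
        ∀ X Y : Finset (Fin n), X ≠ Y → X.card ≤ d → Y.card ≤ d →
          ∃ i : Fin f, (A i ∩ X).card % 2 ≠ (A i ∩ Y).card % 2 :=
  parity_search_d_log_n_general d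
end
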